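/- arXiv:1608.07887 — 4 statements merged into one kernel-verified Lean document; each statement's English description precedes it below -/
import Mathlib

section
/- Let p ∈ (1,∞), q its conjugate, and η a function holomorphic on Re(s) > 1/p. Suppose for every ε > 0 there exist n ∈ ℕ, b_1,…,b_n ∈ ℂ, θ_1,…,θ_n ≥ 1 such that the function h with ∫_0^1 (1 + h(x)) x^{s−1} dx = (1 − η(s)·Σ_k b_k θ_k^{−s})/s for Re(s) > 0 satisfies ‖1_{(0,1)} + h‖_{L^p(0,1)} < ε. Then η has no zeros in the half-plane Re(s) > 1/p. -/
/-!
If `η(ρ) = 0`, the Mellin identity at `s = ρ` says that `1 + h` integrates against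
`x ^ (ρ - 1)` over `(0,1)` to `1/ρ`, whatever the approximant. Since `Re ρ > 1/p`, the weight
`x ^ (ρ - 1)` lies in `L^q(0,1)`, so by Hölder `‖1/ρ‖ ≤ ε · ‖x ^ (ρ - 1)‖_q` for every `ε > 0`,
which is absurd.
-/

open MeasureTheory Set Filter Topology
open scoped ENNReal

lemma enorm_integral_mul_le_eLpNorm_mul_eLpNorm {α 𝕜 : Type*} [MeasurableSpace α]
    [NormedRing 𝕜] [NormedSpace ℝ 𝕜] {μ : Measure α} {p q : ℝ≥0∞} [p.HolderConjugate q]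
    {f g : α → 𝕜} (hf : AEStronglyMeasurable f μ) (hg : AEStronglyMeasurable g μ) :
    ‖∫ x, f x * g x ∂μ‖ₑ ≤ eLpNorm f p μ * eLpNorm g q μ :=
  calc ‖∫ x, f x * g x ∂μ‖ₑ ≤ ∫⁻ x, ‖f x * g x‖ₑ ∂μ := enorm_integral_le_lintegral_enorm _
    _ = eLpNorm (f • g) 1 μ := eLpNorm_one_eq_lintegral_enorm.symm
    _ ≤ eLpNorm f p μ * eLpNorm g q μ := eLpNorm_smul_le_mul_eLpNorm hg hf

lemma memLp_cpow_restrict_Ioo_zero_one {s : ℂ} {q : ℝ} (hq : 0 < q) (hs : -1 < s.re * q) :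
    MemLp (fun x : ℝ => (x : ℂ) ^ s) (ENNReal.ofReal q) (volume.restrict (Ioo 0 1)) := by
  have hmeas : AEStronglyMeasurable (fun x : ℝ => (x : ℂ) ^ s) (volume.restrict (Ioo 0 1)) :=
    (by fun_prop : Measurable fun x : ℝ => (x : ℂ) ^ s).aestronglyMeasurable
  rw [← integrable_norm_rpow_iff hmeas (by simpa using hq) ENNReal.ofReal_ne_top,
    ENNReal.toReal_ofReal hq.le]
  have hrpow : IntegrableOn (fun x : ℝ => x ^ (s.re * q)) (Ioo 0 1) := by
    have := intervalIntegral.intervalIntegrable_rpow' (a := 0) (b := 1) hs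
    rw [intervalIntegrable_iff_integrableOn_Ioc_of_le zero_le_one] at this
    exact this.mono_set Ioo_subset_Ioc_self
  refine hrpow.congr_fun (fun x hx => ?_) measurableSet_Ioo
  rw [Complex.norm_cpow_eq_rpow_re_of_pos hx.1, ← Real.rpow_mul hx.1.le]

lemma ENNReal.eq_zero_of_forall_le_ofReal_mul {a C : ℝ≥0∞} (hC : C ≠ ∞)
    (h : ∀ ε : ℝ, 0 < ε → a ≤ ENNReal.ofReal ε * C) : a = 0 := by
  have hlim : Tendsto (fun ε : ℝ => ENNReal.ofReal ε * C) (𝓝[>] 0) (𝓝 0) := by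
    simpa using ENNReal.Tendsto.mul_const (ENNReal.tendsto_ofReal
      (tendsto_nhdsWithin_of_tendsto_nhds (s := Ioi 0) (tendsto_id (x := 𝓝 0)))) (Or.inr hC)
  exact nonpos_iff_eq_zero.mp <| ge_of_tendsto hlim <|
    eventually_nhdsWithin_of_forall fun ε hε => h ε hε

theorem approximation_implies_nonvanishing_general
    (p q : ℝ) (hp : 1 < p) (hpq : 1/p + 1/q = 1)
    (η : ℂ → ℂ)
    (happrox : ∀ ε : ℝ, 0 < ε → ∃ (n : ℕ) (b : Fin n → ℂ) (θ : Fin n → ℝ) (h : ℝ → ℂ),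
      (∀ k, 1 ≤ θ k) ∧ Measurable h ∧
      (∀ s : ℂ, 0 < s.re →
        ∫ x in Set.Ioo (0:ℝ) 1, (1 + h x) * (x:ℂ) ^ (s-1)
          = (1 - η s * ∑ k, b k * ((θ k : ℂ)) ^ (-s)) / s) ∧
      eLpNorm (fun x => 1 + h x) (ENNReal.ofReal p)
          (volume.restrict (Set.Ioo (0:ℝ) 1)) < ENNReal.ofReal ε) :
    ∀ s : ℂ, 1/p < s.re → η s ≠ 0 := by
  intro ρ hρ hηρ
  have hpq' : p.HolderConjugate q :=
    Real.holderConjugate_iff.mpr ⟨hp, by simpa only [one_div] using hpq⟩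
  have := hpq'.ennrealOfReal
  have hρ0 : 0 < ρ.re := lt_trans (by have := hpq'.pos; positivity) hρ
  have hweight : MemLp (fun x : ℝ => (x : ℂ) ^ (ρ - 1)) (ENNReal.ofReal q)
      (volume.restrict (Ioo 0 1)) := by
    refine memLp_cpow_restrict_Ioo_zero_one hpq'.symm.pos ?_
    have hq := hpq'.symm.pos
    rw [Complex.sub_re, Complex.one_re]
    have hpρ : 1 < p * ρ.re := by rwa [div_lt_iff₀ hpq'.pos, mul_comm] at hρ
    field_simp at hpq ⊢
    nlinarith
  have hbound : ∀ ε : ℝ, 0 < ε → ‖1 / ρ‖ₑ ≤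
      ENNReal.ofReal ε * eLpNorm (fun x : ℝ => (x : ℂ) ^ (ρ - 1)) (ENNReal.ofReal q)
        (volume.restrict (Ioo 0 1)) := by
    intro ε hε
    obtain ⟨n, b, θ, h, -, hh, hmellin, hnorm⟩ := happrox ε hε
    calc ‖1 / ρ‖ₑ = ‖∫ x in Ioo (0:ℝ) 1, (1 + h x) * (x : ℂ) ^ (ρ - 1)‖ₑ := by
          rw [hmellin ρ hρ0, hηρ, zero_mul, sub_zero]
      _ ≤ _ := enorm_integral_mul_le_eLpNorm_mul_eLpNorm (by fun_prop) hweight.1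
      _ ≤ _ := by gcongr
  have h0 := ENNReal.eq_zero_of_forall_le_ofReal_mul hweight.eLpNorm_ne_top hbound
  simp only [enorm_eq_zero, one_div, inv_eq_zero] at h0
  exact hρ0.ne' (by simp [h0])

/-- If the constant function `1` on `(0,1)` can be approximated arbitrarily well in
`L^p(0,1)` by functions `−h` whose Mellin transform is `−(1 − η(s)·∑ b_k θ_k^{−s})/s + 1/s`,
then `η` has no zeros in the half-plane `Re(s) > 1/p`. -/
theorem approximation_implies_nonvanishing
    (p q : ℝ) (hp : 1 < p) (hpq : 1/p + 1/q = 1)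
    (η : ℂ → ℂ) (hη : DifferentiableOn ℂ η {s : ℂ | 1/p < s.re})
    (happrox : ∀ ε : ℝ, 0 < ε → ∃ (n : ℕ) (b : Fin n → ℂ) (θ : Fin n → ℝ) (h : ℝ → ℂ),
      (∀ k, 1 ≤ θ k) ∧ Measurable h ∧
      (∀ s : ℂ, 0 < s.re →
        ∫ x in Set.Ioo (0:ℝ) 1, (1 + h x) * (x:ℂ) ^ (s-1)
          = (1 - η s * ∑ k, b k * ((θ k : ℂ)) ^ (-s)) / s) ∧
      eLpNorm (fun x => 1 + h x) (ENNReal.ofReal p)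
          (volume.restrict (Set.Ioo (0:ℝ) 1)) < ENNReal.ofReal ε) :
    ∀ s : ℂ, 1/p < s.re → η s ≠ 0 :=
  approximation_implies_nonvanishing_general p q hp hpq η happrox
end

section
/- For the sequence λ_n with 1 = λ_1 < λ_2 < ⋯, define φ_1(t) = 1 and φ_n(t) = (λ_n^{1−it} − λ_{n−1}^{1−it})/√(λ_n² − λ_{n−1}²) for n ≥ 2. Then ∫_ℝ φ_n(t)·conj(φ_m(t)) dt/(π(1+t²)) = δ_{nm} for all n, m. -/
/-!
The weight `dt / (π (1 + t²))` is the Cauchy density, whose characteristic function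
`∫ e^{ict} dt / (π (1 + t²)) = e^{-|c|}` follows by Fourier inversion from the elementary
transform of `e^{-|x|}`. Consequently, for `a, b ≥ 0`,
`∫ a^{1-it} conj (b^{1-it}) dt / (π (1 + t²)) = a b e^{-|log b - log a|} = min a b ^ 2`,
which is the inner product of the indicators of `(0, a]` and `(0, b]` in `L²(d(x²))`.
Setting `λ₀ = 0` (note `0^{1-it} = 0` and `λ₁^{1-it} = 1`), `φₙ` corresponds to the indicator
of `(λₙ₋₁, λₙ]` divided by the square root of its `d(x²)`-mass `λₙ² - λₙ₋₁²`; these intervals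
are pairwise disjoint.
-/

open MeasureTheory

/-- Lubinsky's general Dirichlet orthogonal polynomials: `φ_1(t) = 1`,
`φ_n(t) = (λ_n^{1−it} − λ_{n−1}^{1−it})/√(λ_n² − λ_{n−1}²)` for `n ≥ 2`. -/
noncomputable def lubinskyPhi (lam : ℕ → ℝ) (n : ℕ) (t : ℝ) : ℂ :=
  if n = 1 then 1 else
    (((lam n : ℝ) : ℂ) ^ ((1 : ℂ) - Complex.I * t)
        - ((lam (n - 1) : ℝ) : ℂ) ^ ((1 : ℂ) - Complex.I * t))
      / ((Real.sqrt ((lam n)^2 - (lam (n - 1))^2) : ℝ) : ℂ)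

open Set FourierTransform
open scoped Real

theorem fourier_exp_neg_abs (w : ℝ) :
    𝓕 (fun x : ℝ => (Real.exp (-|x|) : ℂ)) w = ((2 / (1 + (2 * π * w) ^ 2) : ℝ) : ℂ) := by
  set θ : ℂ := 2 * π * w * Complex.I
  have hIic : ∀ x ∈ Iic (0 : ℝ),
      Complex.exp (↑(-2 * π * x * w) * Complex.I) • (Real.exp (-|x|) : ℂ)
        = Complex.exp ((1 - θ) * x) := by
    intro x hx
    rw [abs_of_nonpos hx, neg_neg, smul_eq_mul, Complex.ofReal_exp, ← Complex.exp_add]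
    congr 1; push_cast; ring
  have hIoi : ∀ x ∈ Ioi (0 : ℝ),
      Complex.exp (↑(-2 * π * x * w) * Complex.I) • (Real.exp (-|x|) : ℂ)
        = Complex.exp ((-1 - θ) * x) := by
    intro x hx
    rw [abs_of_pos hx, smul_eq_mul, Complex.ofReal_exp, ← Complex.exp_add]
    congr 1; push_cast; ring
  have hre₁ : 0 < (1 - θ).re := by simp [θ]
  have hre₂ : (-1 - θ).re < 0 := by simp [θ]
  have hne₁ : 1 - θ ≠ 0 := fun h => by simp [h] at hre₁
  have hne₂ : -1 - θ ≠ 0 := fun h => by simp [h] at hre₂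
  rw [Real.fourier_real_eq_integral_exp_smul, ← intervalIntegral.integral_Iic_add_Ioi,
    setIntegral_congr_fun measurableSet_Iic hIic, setIntegral_congr_fun measurableSet_Ioi hIoi,
    integral_exp_mul_complex_Iic hre₁, integral_exp_mul_complex_Ioi hre₂]
  · have hfactor : ((1 + (2 * π * w) ^ 2 : ℝ) : ℂ) = (1 - θ) * -(-1 - θ) := by
      push_cast
      linear_combination (2 * π * w : ℂ) ^ 2 * Complex.I_sq
    rw [Complex.ofReal_div, hfactor]
    simp only [Complex.ofReal_zero, Complex.ofReal_ofNat, mul_zero, Complex.exp_zero]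
    field_simp
    ring
  · exact (integrableOn_exp_mul_complex_Iic hre₁ 0).congr_fun (fun x hx => (hIic x hx).symm)
      measurableSet_Iic
  · exact (integrableOn_exp_mul_complex_Ioi hre₂ 0).congr_fun (fun x hx => (hIoi x hx).symm)
      measurableSet_Ioi

theorem integrable_exp_neg_abs : Integrable (fun x : ℝ => Real.exp (-|x|)) := by
  have hIic : IntegrableOn (fun x : ℝ => Real.exp (-|x|)) (Iic 0) :=
    (integrableOn_exp_mul_Iic one_pos 0).congr_fun
      (fun x hx => by simp [abs_of_nonpos (mem_Iic.mp hx)]) measurableSet_Iic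
  have hIoi : IntegrableOn (fun x : ℝ => Real.exp (-|x|)) (Ioi 0) :=
    (integrableOn_exp_mul_Ioi neg_one_lt_zero 0).congr_fun
      (fun x hx => by simp [abs_of_pos (mem_Ioi.mp hx)]) measurableSet_Ioi
  rw [← integrableOn_univ, ← Iic_union_Ioi (a := 0)]
  exact hIic.union hIoi

theorem integral_cexp_mul_I_div_pi_mul_one_add_sq (c : ℝ) :
    ∫ t : ℝ, Complex.exp (↑(c * t) * Complex.I) / ((π * (1 + t ^ 2) : ℝ) : ℂ)
      = Real.exp (-|c|) := by
  set f : ℝ → ℂ := fun x => Real.exp (-|x|)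
  set g : ℝ → ℂ := fun t => Complex.exp (↑(c * t) * Complex.I) / ((π * (1 + t ^ 2) : ℝ) : ℂ)
  have hf : Continuous f := by fun_prop
  have hFf : Integrable (𝓕 f) := by
    rw [funext fourier_exp_neg_abs]
    exact ((integrable_inv_one_add_sq.comp_mul_left' (by positivity : 2 * π ≠ 0)).const_mul
      2).ofReal
  have hscale : ∀ v : ℝ, Complex.exp (↑(2 * π * inner ℝ v c) * Complex.I) • 𝓕 f v
      = (2 * π) • g (2 * π * v) := by
    intro v
    rw [fourier_exp_neg_abs, Real.inner_apply, smul_eq_mul, Complex.real_smul]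
    simp only [g]
    push_cast
    field_simp
  calc ∫ t, g t = ∫ v, (2 * π) • g (2 * π * v) := by
        rw [integral_smul, Measure.integral_comp_mul_left, smul_smul,
          abs_of_pos (by positivity : 0 < (2 * π)⁻¹), mul_inv_cancel₀ (by positivity), one_smul]
    _ = 𝓕⁻ (𝓕 f) c := by simp only [Real.fourierInv_eq', hscale]
    _ = Real.exp (-|c|) := integrable_exp_neg_abs.ofReal.fourierInv_fourier_eq hFf hf.continuousAt

theorem integrable_cexp_mul_I_div_pi_mul_one_add_sq (c : ℝ) :
    Integrable fun t : ℝ => Complex.exp (↑(c * t) * Complex.I) / ((π * (1 + t ^ 2) : ℝ) : ℂ) := by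
  have hmeas : Continuous fun t : ℝ =>
      Complex.exp (↑(c * t) * Complex.I) / ((π * (1 + t ^ 2) : ℝ) : ℂ) :=
    .div (by fun_prop) (by fun_prop) fun t => Complex.ofReal_ne_zero.mpr (by positivity)
  refine (integrable_inv_one_add_sq.const_mul π⁻¹).mono' hmeas.aestronglyMeasurable
    (.of_forall fun t => ?_)
  rw [norm_div, Complex.norm_exp_ofReal_mul_I, Complex.norm_real,
    Real.norm_of_nonneg (by positivity), one_div, mul_inv]

noncomputable def dirichletTerm (a t : ℝ) : ℂ := (a : ℂ) ^ ((1 : ℂ) - Complex.I * t)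

noncomputable def cauchyPairing (f g : ℝ → ℂ) : ℂ :=
  ∫ t : ℝ, f t * (starRingEnd ℂ) (g t) / ((π * (1 + t ^ 2) : ℝ) : ℂ)

@[simp]
theorem dirichletTerm_zero : dirichletTerm 0 = 0 := by
  ext t
  refine Complex.zero_cpow fun h => ?_
  simpa using congrArg Complex.re h

theorem dirichletTerm_mul_conj {a b : ℝ} (ha : 0 ≤ a) (hb : 0 ≤ b) (t : ℝ) :
    dirichletTerm a t * (starRingEnd ℂ) (dirichletTerm b t)
      = ((a * b : ℝ) : ℂ) * Complex.exp (↑((Real.log b - Real.log a) * t) * Complex.I) := by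
  rcases ha.eq_or_lt with rfl | ha₀
  · simp
  rcases hb.eq_or_lt with rfl | hb₀
  · simp
  rw [dirichletTerm, dirichletTerm,
    Complex.cpow_def_of_ne_zero (Complex.ofReal_ne_zero.mpr ha₀.ne'),
    Complex.cpow_def_of_ne_zero (Complex.ofReal_ne_zero.mpr hb₀.ne'), ← Complex.exp_conj,
    ← Complex.exp_add, ← Complex.ofReal_log ha, ← Complex.ofReal_log hb]
  conv_rhs => rw [← Real.exp_log ha₀, ← Real.exp_log hb₀]
  push_cast
  rw [← Complex.exp_add, ← Complex.exp_add]
  congr 1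
  simp only [map_mul, map_sub, map_one, Complex.conj_ofReal, Complex.conj_I, Real.log_exp]
  ring

theorem mul_mul_exp_neg_abs_log_sub {a b : ℝ} (ha : 0 ≤ a) (hb : 0 ≤ b) :
    a * b * Real.exp (-|Real.log b - Real.log a|) = min a b ^ 2 := by
  rcases ha.eq_or_lt with rfl | ha₀
  · simp [min_eq_left hb]
  rcases hb.eq_or_lt with rfl | hb₀
  · simp [min_eq_right ha]
  rcases le_total a b with hab | hab
  · rw [abs_of_nonneg (sub_nonneg.mpr (Real.log_le_log ha₀ hab)), neg_sub, Real.exp_sub,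
      Real.exp_log ha₀, Real.exp_log hb₀, min_eq_left hab]
    field_simp
  · rw [abs_of_nonpos (sub_nonpos.mpr (Real.log_le_log hb₀ hab)), neg_neg, Real.exp_sub,
      Real.exp_log ha₀, Real.exp_log hb₀, min_eq_right hab]
    field_simp

theorem integrable_dirichletTerm_mul_conj_div {a b : ℝ} (ha : 0 ≤ a) (hb : 0 ≤ b) :
    Integrable fun t : ℝ =>
      dirichletTerm a t * (starRingEnd ℂ) (dirichletTerm b t) / ((π * (1 + t ^ 2) : ℝ) : ℂ) := by
  simp_rw [dirichletTerm_mul_conj ha hb, mul_div_assoc]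
  exact (integrable_cexp_mul_I_div_pi_mul_one_add_sq _).const_mul _

theorem cauchyPairing_dirichletTerm {a b : ℝ} (ha : 0 ≤ a) (hb : 0 ≤ b) :
    cauchyPairing (dirichletTerm a) (dirichletTerm b) = ((min a b ^ 2 : ℝ) : ℂ) := by
  simp_rw [cauchyPairing, dirichletTerm_mul_conj ha hb, mul_div_assoc, integral_const_mul,
    integral_cexp_mul_I_div_pi_mul_one_add_sq, ← Complex.ofReal_mul,
    mul_mul_exp_neg_abs_log_sub ha hb]

theorem cauchyPairing_dirichletTerm_sub_div {a b c d : ℝ} (ha : 0 ≤ a) (hb : 0 ≤ b) (hc : 0 ≤ c)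
    (hd : 0 ≤ d) (s r : ℝ) :
    cauchyPairing (fun t => (dirichletTerm a t - dirichletTerm b t) / s)
        (fun t => (dirichletTerm c t - dirichletTerm d t) / r)
      = (((min a c ^ 2 - min a d ^ 2 - min b c ^ 2 + min b d ^ 2) / (s * r) : ℝ) : ℂ) := by
  set P : ℝ → ℝ → ℝ → ℂ := fun x y t =>
    dirichletTerm x t * (starRingEnd ℂ) (dirichletTerm y t) / ((π * (1 + t ^ 2) : ℝ) : ℂ)
  have hP {x y : ℝ} (hx : 0 ≤ x) (hy : 0 ≤ y) : ∫ t, P x y t = ((min x y ^ 2 : ℝ) : ℂ) :=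
    cauchyPairing_dirichletTerm hx hy
  have hPi {x y : ℝ} (hx : 0 ≤ x) (hy : 0 ≤ y) : Integrable (P x y) :=
    integrable_dirichletTerm_mul_conj_div hx hy
  have hexpand : ∀ t, (dirichletTerm a t - dirichletTerm b t) / s
        * (starRingEnd ℂ) ((dirichletTerm c t - dirichletTerm d t) / r)
        / ((π * (1 + t ^ 2) : ℝ) : ℂ)
      = ((s * r : ℝ) : ℂ)⁻¹ * ((P a c t - P a d t) - (P b c t - P b d t)) := by
    intro t
    simp only [P, map_div₀, map_sub, Complex.conj_ofReal]
    push_cast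
    ring
  simp_rw [cauchyPairing, hexpand]
  rw [integral_const_mul, integral_sub (f := fun t => P a c t - P a d t)
      (g := fun t => P b c t - P b d t) ((hPi ha hc).sub (hPi ha hd)) ((hPi hb hc).sub (hPi hb hd)),
    integral_sub (hPi ha hc) (hPi ha hd), integral_sub (hPi hb hc) (hPi hb hd),
    hP ha hc, hP ha hd, hP hb hc, hP hb hd]
  push_cast
  ring

theorem min_sq_cross_sum_eq_zero_of_le_or_le {a b c d : ℝ} (hba : b ≤ a) (hdc : d ≤ c)
    (h : a ≤ d ∨ c ≤ b) :
    min a c ^ 2 - min a d ^ 2 - min b c ^ 2 + min b d ^ 2 = 0 := by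
  rcases h with h | h
  · rw [min_eq_left (h.trans hdc), min_eq_left h, min_eq_left (hba.trans (h.trans hdc)),
      min_eq_left (hba.trans h)]
    ring
  · rw [min_eq_right (h.trans hba), min_eq_right ((hdc.trans h).trans hba), min_eq_right h,
      min_eq_right (hdc.trans h)]
    ring

theorem strictMono_update_zero {lam : ℕ → ℝ} (h1 : 0 < lam 1)
    (hmono : ∀ n : ℕ, 1 ≤ n → lam n < lam (n + 1)) : StrictMono (Function.update lam 0 0) := by
  refine strictMono_nat_of_lt_succ fun n => ?_
  rcases n.eq_zero_or_pos with rfl | hn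
  · simpa using h1
  · rw [Function.update_of_ne n.succ_ne_zero, Function.update_of_ne hn.ne']
    exact hmono n hn

theorem lubinskyPhi_eq {lam : ℕ → ℝ} (hlam1 : lam 1 = 1) {n : ℕ} (hn : 1 ≤ n) :
    lubinskyPhi lam n = fun t =>
      (dirichletTerm (Function.update lam 0 0 n) t
          - dirichletTerm (Function.update lam 0 0 (n - 1)) t)
        / (√(Function.update lam 0 0 n ^ 2 - Function.update lam 0 0 (n - 1) ^ 2) : ℝ) := by
  ext t
  rcases hn.eq_or_lt with rfl | hn
  · simp [lubinskyPhi, hlam1]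
    simp [dirichletTerm]
  · rw [Function.update_of_ne (by omega), Function.update_of_ne (by omega), lubinskyPhi,
      if_neg hn.ne', dirichletTerm, dirichletTerm]

/-- Orthonormality with respect to the arctangent density:
`∫_ℝ φ_n(t)·conj(φ_m(t)) dt/(π(1+t²)) = δ_{nm}`. -/
theorem lubinskyPhi_orthonormal
    (lam : ℕ → ℝ) (hlam1 : lam 1 = 1) (hmono : ∀ n : ℕ, 1 ≤ n → lam n < lam (n+1))
    (n m : ℕ) (hn : 1 ≤ n) (hm : 1 ≤ m) :
    ∫ t : ℝ, lubinskyPhi lam n t * (starRingEnd ℂ) (lubinskyPhi lam m t)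
        / ((Real.pi * (1 + t^2) : ℝ) : ℂ)
      = if n = m then 1 else 0 := by
  set μ := Function.update lam 0 0
  have hμ : StrictMono μ := strictMono_update_zero (hlam1 ▸ one_pos) hmono
  have hμ₀ (k : ℕ) : 0 ≤ μ k := by simpa [μ] using hμ.monotone k.zero_le
  have hstep {k : ℕ} (hk : 1 ≤ k) : μ (k - 1) < μ k := hμ (by omega)
  change cauchyPairing (lubinskyPhi lam n) (lubinskyPhi lam m) = _
  rw [lubinskyPhi_eq hlam1 hn, lubinskyPhi_eq hlam1 hm,
    cauchyPairing_dirichletTerm_sub_div (hμ₀ _) (hμ₀ _) (hμ₀ _) (hμ₀ _)]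
  split_ifs with hnm
  · subst hnm
    have hpos : 0 < μ n ^ 2 - μ (n - 1) ^ 2 :=
      sub_pos.mpr (pow_lt_pow_left₀ (hstep hn) (hμ₀ _) two_ne_zero)
    rw [min_self, min_self, min_eq_right (hstep hn).le, min_eq_left (hstep hn).le, sub_add_cancel,
      Real.mul_self_sqrt hpos.le, div_self hpos.ne', Complex.ofReal_one]
  · rw [min_sq_cross_sum_eq_zero_of_le_or_le (hstep hn).le (hstep hm).le, zero_div,
      Complex.ofReal_zero]
    rcases Nat.lt_or_gt_of_ne hnm with h | h
    · exact .inl (hμ.monotone (by omega))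
    · exact .inr (hμ.monotone (by omega))
end

section
/- Let p ∈ (1,2] and suppose the kernel K_n satisfies K_n(u,u) = (p/2)|1/p + iu|²·log n·(1+o(1)) uniformly on compacts, and |K_n(u,v)| ≤ p·|1/p+iu||1/p−iv|/|u−v| + o(log n) for u ≠ v. Then for distinct reals t_1,…,t_m, the matrix H = (K_n(t_i,t_j)) satisfies det H / (log n)^m → (p/2)^m·∏_{j=1}^m |1/p + i t_j|² as n → ∞, and H is nonsingular for all sufficiently large n. -/
/-!
Divide the matrix `(K_n(t_i, t_j))` entrywise by `log n`. The diagonal hypothesis makes the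
diagonal entries converge to `(p/2)|1/p + i t_j|²`, and the off-diagonal bound is `O(1) + o(log n)`,
so the off-diagonal entries tend to `0`. By continuity of
the determinant, `det H / (log n)^m` tends to the determinant of the limiting diagonal matrix,
which is positive; in particular `det H ≠ 0` for large `n`.
-/

open Filter Finset Topology Asymptotics

theorem tendsto_div_of_tendsto_div_const_mul {α 𝕜 : Type*} [Field 𝕜] [TopologicalSpace 𝕜]
    [ContinuousMul 𝕜] {l : Filter α} {f g : α → 𝕜} {c : 𝕜} (hc : c ≠ 0)
    (h : Tendsto (fun x => f x / (c * g x)) l (𝓝 1)) :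
    Tendsto (fun x => f x / g x) l (𝓝 c) := by
  refine (one_mul c ▸ h.mul_const c).congr fun x => ?_
  rw [div_mul_eq_mul_div, mul_comm (f x) c, mul_div_mul_left _ _ hc]

theorem isLittleO_of_norm_le_const_add {α E : Type*} [NormedAddCommGroup E] {l : Filter α}
    {f : α → E} {g : α → ℝ} (C : ℝ) (hg : Tendsto g l atTop)
    (h : ∀ ε > 0, ∀ᶠ x in l, ‖f x‖ ≤ C + ε * g x) : f =o[l] g := by
  refine isLittleO_iff.mpr fun ε hε => ?_
  filter_upwards [h (ε / 2) (half_pos hε), hg.eventually_ge_atTop (2 * C / ε),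
    hg.eventually_ge_atTop 0] with x hfx hCx hgx
  rw [Real.norm_of_nonneg hgx]
  rw [div_le_iff₀ hε] at hCx
  linarith

theorem Matrix.det_of_div {n 𝕜 : Type*} [Fintype n] [DecidableEq n] [Field 𝕜]
    (A : Matrix n n 𝕜) (s : 𝕜) :
    (Matrix.of fun i j => A i j / s).det = A.det / s ^ Fintype.card n := by
  have : (Matrix.of fun i j => A i j / s) = s⁻¹ • A := by
    ext i j
    simp [div_eq_inv_mul]
  rw [this, Matrix.det_smul, inv_pow, inv_mul_eq_div]

theorem Matrix.tendsto_of_diag_offDiag {β α ι 𝕜 : Type*} [Fintype ι] [DecidableEq ι]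
    [TopologicalSpace 𝕜] [Zero 𝕜] {l : Filter β} {A : β → α → α → 𝕜} {d : α → 𝕜}
    {t : ι → α} (ht : Function.Injective t)
    (hdiag : ∀ u, Tendsto (fun n => A n u u) l (𝓝 (d u)))
    (hoff : ∀ u v, u ≠ v → Tendsto (fun n => A n u v) l (𝓝 0)) :
    Tendsto (fun n => Matrix.of fun i j => A n (t i) (t j)) l
      (𝓝 (Matrix.diagonal fun i => d (t i))) := by
  refine tendsto_pi_nhds.mpr fun i => tendsto_pi_nhds.mpr fun j => ?_
  rcases eq_or_ne i j with rfl | hij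
  · simpa using hdiag (t i)
  · simpa [Matrix.diagonal_apply_ne _ hij] using hoff _ _ (ht.ne hij)

theorem Matrix.tendsto_det_div_pow_of_diag_offDiag {β α ι 𝕜 : Type*} [Fintype ι]
    [DecidableEq ι] [Field 𝕜] [TopologicalSpace 𝕜] [IsTopologicalRing 𝕜] {l : Filter β}
    {A : β → α → α → 𝕜} {s : β → 𝕜} {d : α → 𝕜} {t : ι → α} (ht : Function.Injective t)
    (hdiag : ∀ u, Tendsto (fun n => A n u u / s n) l (𝓝 (d u)))
    (hoff : ∀ u v, u ≠ v → Tendsto (fun n => A n u v / s n) l (𝓝 0)) :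
    Tendsto (fun n => (Matrix.of fun i j => A n (t i) (t j)).det / s n ^ Fintype.card ι) l
      (𝓝 (∏ i, d (t i))) := by
  have hM := Matrix.tendsto_of_diag_offDiag (A := fun n u v => A n u v / s n) ht hdiag hoff
  have hdet := (continuous_id.matrix_det.tendsto _).comp hM
  simp only [Function.comp_def, id, Matrix.det_diagonal] at hdet
  exact hdet.congr fun n => Matrix.det_of_div _ (s n)

section Kernel

variable {p : ℝ} {K : ℕ → ℝ → ℝ → ℂ}

theorem tendsto_kernel_diag_div_log (hp : 0 < p)
    (hdiag : ∀ S : Set ℝ, IsCompact S →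
      TendstoUniformlyOn
        (fun (n : ℕ) (u : ℝ) => K n u u / (((p/2) * (1/p^2 + u^2) * Real.log n : ℝ) : ℂ))
        1 atTop S)
    (u : ℝ) :
    Tendsto (fun n : ℕ => K n u u / ((Real.log n : ℝ) : ℂ)) atTop
      (𝓝 (((p/2) * (1/p^2 + u^2) : ℝ) : ℂ)) := by
  have hc : (((p/2) * (1/p^2 + u^2) : ℝ) : ℂ) ≠ 0 := by
    exact_mod_cast (show 0 < (p/2) * (1/p^2 + u^2) by positivity).ne'
  refine tendsto_div_of_tendsto_div_const_mul hc ?_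
  simpa using (hdiag {u} isCompact_singleton).tendsto_at (Set.mem_singleton u)

theorem tendsto_kernel_offDiag_div_log
    (hoff : ∀ S : Set ℝ, IsCompact S → ∀ ε : ℝ, 0 < ε → ∀ᶠ n : ℕ in atTop,
      ∀ u ∈ S, ∀ v ∈ S, u ≠ v →
        ‖K n u v‖
          ≤ p * Real.sqrt (1/p^2 + u^2) * Real.sqrt (1/p^2 + v^2) / |u - v|
            + ε * Real.log n)
    {u v : ℝ} (huv : u ≠ v) :
    Tendsto (fun n : ℕ => K n u v / ((Real.log n : ℝ) : ℂ)) atTop (𝓝 0) := by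
  have hlog : Tendsto (fun n : ℕ => Real.log n) atTop atTop :=
    Real.tendsto_log_atTop.comp tendsto_natCast_atTop_atTop
  have ho : (fun n : ℕ => K n u v) =o[atTop] fun n => Real.log n := by
    refine isLittleO_of_norm_le_const_add
      (p * Real.sqrt (1/p^2 + u^2) * Real.sqrt (1/p^2 + v^2) / |u - v|) hlog fun ε hε => ?_
    filter_upwards [hoff {u, v} (Set.toFinite _).isCompact ε hε] with n hn
    exact hn u (by simp) v (by simp) huv
  have ho' := isLittleO_norm_right.mpr ho
  simp_rw [← Complex.norm_real] at ho'
  exact (isLittleO_norm_right.mp ho').tendsto_div_nhds_zero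

end Kernel

theorem kernel_det_asymptotics_general
    (p : ℝ) (hp1 : 1 < p)
    (K : ℕ → ℝ → ℝ → ℂ)
    (hdiag : ∀ S : Set ℝ, IsCompact S →
      TendstoUniformlyOn
        (fun (n : ℕ) (u : ℝ) =>
          K n u u / (((p/2) * (1/p^2 + u^2) * Real.log n : ℝ) : ℂ))
        1 atTop S)
    (hoff : ∀ S : Set ℝ, IsCompact S → ∀ ε : ℝ, 0 < ε → ∀ᶠ n : ℕ in atTop,
      ∀ u ∈ S, ∀ v ∈ S, u ≠ v →
        ‖K n u v‖
          ≤ p * Real.sqrt (1/p^2 + u^2) * Real.sqrt (1/p^2 + v^2) / |u - v|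
            + ε * Real.log n)
    (m : ℕ) (t : Fin m → ℝ) (ht : Function.Injective t) :
    Tendsto
      (fun n : ℕ =>
        (Matrix.of fun i j : Fin m => K n (t i) (t j)).det / (((Real.log n) ^ m : ℝ) : ℂ))
      atTop (𝓝 (((p/2)^m * ∏ j, (1/p^2 + (t j)^2) : ℝ) : ℂ))
    ∧ ∀ᶠ n : ℕ in atTop, (Matrix.of fun i j : Fin m => K n (t i) (t j)).det ≠ 0 := by
  have hp : 0 < p := one_pos.trans hp1
  have hlim := Matrix.tendsto_det_div_pow_of_diag_offDiag ht
    (tendsto_kernel_diag_div_log hp hdiag) (fun _ _ => tendsto_kernel_offDiag_div_log hoff)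
  have hprod : ∏ j, (((p/2) * (1/p^2 + (t j)^2) : ℝ) : ℂ)
      = (((p/2)^m * ∏ j, (1/p^2 + (t j)^2) : ℝ) : ℂ) := by
    push_cast
    rw [prod_mul_distrib, prod_const, card_univ, Fintype.card_fin]
  simp_rw [hprod, Fintype.card_fin, ← Complex.ofReal_pow] at hlim
  refine ⟨hlim, (hlim.eventually_ne ?_).mono fun n hn => (div_ne_zero_iff.mp hn).1⟩
  exact_mod_cast (mul_pos (by positivity) (prod_pos fun j _ => by positivity)).ne'

/-- If the kernels `K_n` satisfy `K_n(u,u) = (p/2)|1/p+iu|²·log n·(1+o(1))` uniformly on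
compacts and `|K_n(u,v)| ≤ p|1/p+iu||1/p−iv|/|u−v| + o(log n)`, then for distinct reals
`t_1,…,t_m`, `det (K_n(t_i,t_j)) / (log n)^m → (p/2)^m ∏ |1/p+it_j|²`, and the matrix is
nonsingular for all large `n`. -/
theorem kernel_det_asymptotics
    (p : ℝ) (hp1 : 1 < p) (hp2 : p ≤ 2)
    (K : ℕ → ℝ → ℝ → ℂ)
    (hdiag : ∀ S : Set ℝ, IsCompact S →
      TendstoUniformlyOn
        (fun (n : ℕ) (u : ℝ) =>
          K n u u / (((p/2) * (1/p^2 + u^2) * Real.log n : ℝ) : ℂ))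
        1 atTop S)
    (hoff : ∀ S : Set ℝ, IsCompact S → ∀ ε : ℝ, 0 < ε → ∀ᶠ n : ℕ in atTop,
      ∀ u ∈ S, ∀ v ∈ S, u ≠ v →
        ‖K n u v‖
          ≤ p * Real.sqrt (1/p^2 + u^2) * Real.sqrt (1/p^2 + v^2) / |u - v|
            + ε * Real.log n)
    (m : ℕ) (t : Fin m → ℝ) (ht : Function.Injective t) :
    Tendsto
      (fun n : ℕ =>
        (Matrix.of fun i j : Fin m => K n (t i) (t j)).det / (((Real.log n) ^ m : ℝ) : ℂ))
      atTop (𝓝 (((p/2)^m * ∏ j, (1/p^2 + (t j)^2) : ℝ) : ℂ))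
    ∧ ∀ᶠ n : ℕ in atTop, (Matrix.of fun i j : Fin m => K n (t i) (t j)).det ≠ 0 :=
  kernel_det_asymptotics_general p hp1 K hdiag hoff m t ht
end

section
/- Let p ∈ (1,2] and suppose for each n the quantities d_n(L,p) and d_n(η,2) are defined by d_n²(L,p) = inf over Dirichlet polynomials A_n of length n of (1/2π)∫_ℝ |1 − L(1/p+it,χ)A_n(1/p+it)|² dt/(1/p²+t²) and d_n²(η,2) = inf over the same A_n of (1/2π)∫_ℝ |1 − L(1/p+it,χ)A_n(1/2+it)|² dt/(1/4+t²), where η(s) = L(s+1/p−1/2,χ). Then d_n(L,p) ≤ d_n(η,2) ≤ 2·d_n(L,p); in particular d_n(L,p) → 0 if and only if d_n(η,2) → 0. -/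
/-
Multiplying the coefficients `b_k` by `k^{1/2 - 1/p}` turns `A_n(1/2 + it)` into a Dirichlet
polynomial of the same length evaluated at `1/p + it`, so both infima run over the same family of
functions `t ↦ |1 - L(1/p+it,χ) A_n(1/p+it)|²` and differ only in the weight. Since
`1/4 ≤ 1/p² ≤ 1`, the weights satisfy `1/(1/p²+t²) ≤ 1/(1/4+t²) ≤ 4/(1/p²+t²)`, which gives
`d_n²(L,p) ≤ d_n²(η,2) ≤ 4 d_n²(L,p)`.
-/

open Finset MeasureTheory Complex Set

/-- The Dirichlet polynomial `∑_{k=1}^n b_k k^{-s}`, with `b` indexed from `0`. -/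
noncomputable def dirichletPolynomial {n : ℕ} (b : Fin n → ℂ) (s : ℂ) : ℂ :=
  ∑ k : Fin n, b k * (((k : ℕ) + 1 : ℕ) : ℂ) ^ (-s)

section DirichletPolynomial

variable {n : ℕ}

theorem dirichletPolynomial_twist (b : Fin n → ℂ) (w s : ℂ) :
    dirichletPolynomial (fun k => b k * (((k : ℕ) + 1 : ℕ) : ℂ) ^ (-w)) s =
      dirichletPolynomial b (s + w) := by
  refine sum_congr rfl fun k _ => ?_
  rw [mul_assoc, ← cpow_add _ _ (Nat.cast_ne_zero.mpr k.val.succ_ne_zero), neg_add, add_comm]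

theorem continuous_dirichletPolynomial (b : Fin n → ℂ) : Continuous (dirichletPolynomial b) :=
  continuous_finsetSum _ fun k _ => continuous_const.mul <|
    continuous_neg.const_cpow (Or.inl (Nat.cast_ne_zero.mpr k.val.succ_ne_zero))

/-- The set of functions `t ↦ A(σ + it)` with `A` a Dirichlet polynomial of length `n` does not
depend on `σ`. -/
theorem setOf_eq_range_dirichletPolynomial_line (Φ : (ℝ → ℂ) → ℝ) (σ σ' : ℂ) :
    {r : ℝ | ∃ b : Fin n → ℂ, r = Φ fun t : ℝ => dirichletPolynomial b (σ + I * t)} =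
      range fun b : Fin n → ℂ => Φ fun t : ℝ => dirichletPolynomial b (σ' + I * t) := by
  have shift (b : Fin n → ℂ) (τ τ' : ℂ) : ∃ b' : Fin n → ℂ,
      (fun t : ℝ => dirichletPolynomial b' (τ' + I * t)) =
        fun t : ℝ => dirichletPolynomial b (τ + I * t) := by
    refine ⟨_, funext fun t => (dirichletPolynomial_twist b (τ - τ') _).trans ?_⟩
    ring_nf
  ext r
  constructor
  · rintro ⟨b, rfl⟩
    obtain ⟨b', hb'⟩ := shift b σ σ'
    exact ⟨b', congrArg Φ hb'⟩
  · rintro ⟨b, rfl⟩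
    obtain ⟨b', hb'⟩ := shift b σ' σ
    exact ⟨b', congrArg Φ hb'.symm⟩

end DirichletPolynomial

theorem continuous_LFunction_line {q : ℕ} [NeZero q] (χ : DirichletCharacter ℂ q) {σ : ℝ}
    (hσ : σ ≠ 1) : Continuous fun t : ℝ => χ.LFunction (σ + I * t) := by
  refine continuous_iff_continuousAt.mpr fun t => ?_
  have hs : (σ : ℂ) + I * t ≠ 1 := fun h => hσ <| by simpa using congrArg re h
  exact (χ.differentiableAt_LFunction _ (Or.inl hs)).continuousAt.comp
    (f := fun t : ℝ => (σ : ℂ) + I * t) (by fun_prop)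

section IntegralComparison

variable {α : Type*} [MeasurableSpace α] {μ : Measure α} {f g : α → ℝ} {C : ℝ}

theorem integrable_iff_of_le_of_le_mul (hf : AEStronglyMeasurable f μ)
    (hg : AEStronglyMeasurable g μ) (hf0 : ∀ x, 0 ≤ f x) (hfg : ∀ x, f x ≤ g x)
    (hgf : ∀ x, g x ≤ C * f x) : Integrable f μ ↔ Integrable g μ := by
  constructor
  · intro hfi
    refine (hfi.const_mul C).mono' hg (ae_of_all _ fun x => ?_)
    rw [Real.norm_of_nonneg ((hf0 x).trans (hfg x))]
    exact hgf x
  · intro hgi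
    refine hgi.mono' hf (ae_of_all _ fun x => ?_)
    rw [Real.norm_of_nonneg (hf0 x)]
    exact hfg x

/-- The bound `g ≤ C * f` is needed even for this inequality: otherwise `g` could fail to be
integrable while `f` is, and then `∫ g = 0`. -/
theorem integral_le_integral_of_le_of_le_mul (hf : AEStronglyMeasurable f μ)
    (hg : AEStronglyMeasurable g μ) (hf0 : ∀ x, 0 ≤ f x) (hfg : ∀ x, f x ≤ g x)
    (hgf : ∀ x, g x ≤ C * f x) : ∫ x, f x ∂μ ≤ ∫ x, g x ∂μ := by
  by_cases hfi : Integrable f μ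
  · have hgi := (integrable_iff_of_le_of_le_mul hf hg hf0 hfg hgf).mp hfi
    exact integral_mono hfi hgi hfg
  · have hgi := (integrable_iff_of_le_of_le_mul hf hg hf0 hfg hgf).not.mp hfi
    rw [integral_undef hfi, integral_undef hgi]

theorem integral_le_mul_integral_of_le_of_le_mul (hf : AEStronglyMeasurable f μ)
    (hg : AEStronglyMeasurable g μ) (hf0 : ∀ x, 0 ≤ f x) (hfg : ∀ x, f x ≤ g x)
    (hgf : ∀ x, g x ≤ C * f x) : ∫ x, g x ∂μ ≤ C * ∫ x, f x ∂μ := by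
  by_cases hfi : Integrable f μ
  · have hgi := (integrable_iff_of_le_of_le_mul hf hg hf0 hfg hgf).mp hfi
    rw [← integral_const_mul]
    exact integral_mono hgi (hfi.const_mul C) hgf
  · have hgi := (integrable_iff_of_le_of_le_mul hf hg hf0 hfg hgf).not.mp hfi
    rw [integral_undef hfi, integral_undef hgi, mul_zero]

end IntegralComparison

theorem sqrt_iInf_le_mul_sqrt_iInf {ι : Sort*} {F G : ι → ℝ} {c : ℝ} (hc : 0 ≤ c)
    (hG : ∀ i, 0 ≤ G i) (hGF : ∀ i, G i ≤ c ^ 2 * F i) :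
    √(⨅ i, G i) ≤ c * √(⨅ i, F i) := by
  have h : ⨅ i, G i ≤ c ^ 2 * ⨅ i, F i := by
    rw [Real.mul_iInf_of_nonneg (sq_nonneg c)]
    exact ciInf_mono ⟨0, by rintro _ ⟨i, rfl⟩; exact hG i⟩ hGF
  calc √(⨅ i, G i) ≤ √(c ^ 2 * ⨅ i, F i) := Real.sqrt_le_sqrt h
    _ = c * √(⨅ i, F i) := by rw [Real.sqrt_mul (sq_nonneg c), Real.sqrt_sq hc]

section Weights

variable {a : ℝ}

theorem div_add_sq_le_div_quarter_add_sq {x : ℝ} (hx : 0 ≤ x) (ha : 1 / 4 ≤ a) (t : ℝ) :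
    x / (a + t ^ 2) ≤ x / (1 / 4 + t ^ 2) :=
  div_le_div_of_nonneg_left hx (by positivity) (by linarith)

theorem div_quarter_add_sq_le_four_mul_div {x : ℝ} (hx : 0 ≤ x) (ha0 : 0 < a) (ha1 : a ≤ 1)
    (t : ℝ) : x / (1 / 4 + t ^ 2) ≤ 4 * (x / (a + t ^ 2)) := by
  rw [mul_div_assoc', div_le_div_iff₀ (by positivity) (by positivity)]
  nlinarith [sq_nonneg t]

theorem integral_div_add_sq_comparison {N : ℝ → ℝ} (hN : Measurable N) (hN0 : ∀ t, 0 ≤ N t)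
    (ha : 1 / 4 ≤ a) (ha1 : a ≤ 1) :
    ∫ t, N t / (a + t ^ 2) ≤ ∫ t, N t / (1 / 4 + t ^ 2) ∧
      ∫ t, N t / (1 / 4 + t ^ 2) ≤ 4 * ∫ t, N t / (a + t ^ 2) := by
  have hmeas (c : ℝ) : AEStronglyMeasurable (fun t => N t / (c + t ^ 2)) :=
    (hN.div (by fun_prop)).aestronglyMeasurable
  have hle (t : ℝ) := div_add_sq_le_div_quarter_add_sq (hN0 t) ha t
  have hle_four (t : ℝ) := div_quarter_add_sq_le_four_mul_div (hN0 t) (by linarith) ha1 t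
  have hpos (t : ℝ) : 0 ≤ N t / (a + t ^ 2) := div_nonneg (hN0 t) (by positivity)
  exact ⟨integral_le_integral_of_le_of_le_mul (hmeas a) (hmeas _) hpos hle hle_four,
    integral_le_mul_integral_of_le_of_le_mul (hmeas a) (hmeas _) hpos hle hle_four⟩

theorem sqrt_iInf_integral_div_add_sq_comparison {ι : Sort*} {N : ι → ℝ → ℝ}
    (hN : ∀ i, Measurable (N i)) (hN0 : ∀ i t, 0 ≤ N i t) {c : ℝ} (hc : 0 ≤ c)
    (ha : 1 / 4 ≤ a) (ha1 : a ≤ 1) :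
    √(⨅ i, c * ∫ t, N i t / (a + t ^ 2)) ≤ √(⨅ i, c * ∫ t, N i t / (1 / 4 + t ^ 2)) ∧
      √(⨅ i, c * ∫ t, N i t / (1 / 4 + t ^ 2)) ≤
        2 * √(⨅ i, c * ∫ t, N i t / (a + t ^ 2)) := by
  have hcmp (i : ι) := integral_div_add_sq_comparison (hN i) (hN0 i) ha ha1
  have hF0 (i : ι) : 0 ≤ c * ∫ t, N i t / (a + t ^ 2) :=
    mul_nonneg hc (integral_nonneg fun t => div_nonneg (hN0 i t) (by positivity))
  have hFG (i : ι) := mul_le_mul_of_nonneg_left (hcmp i).1 hc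
  have hGF (i : ι) : c * ∫ t, N i t / (1 / 4 + t ^ 2) ≤ 2 ^ 2 * (c * ∫ t, N i t / (a + t ^ 2)) :=
    (mul_le_mul_of_nonneg_left (hcmp i).2 hc).trans_eq (by ring)
  refine ⟨Real.sqrt_le_sqrt (ciInf_mono ⟨0, ?_⟩ hFG),
    sqrt_iInf_le_mul_sqrt_iInf zero_le_two (fun i => (hF0 i).trans (hFG i)) hGF⟩
  rintro _ ⟨i, rfl⟩
  exact hF0 i

end Weights

/-- With `d_n²(L,p)` the infimum over Dirichlet polynomials `A_n` of length `n` of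
`(1/2π)∫ |1 − L(1/p+it,χ)A_n(1/p+it)|² dt/(1/p²+t²)` and `d_n²(η,2)` the corresponding
quantity for `η(s) = L(s+1/p−1/2,χ)` on the line `Re(s)=1/2`, one has
`d_n(L,p) ≤ d_n(η,2) ≤ 2·d_n(L,p)`. -/
theorem dn_L_p_comparison
    (p : ℝ) (hp1 : 1 < p) (hp2 : p ≤ 2) (q : ℕ) [NeZero q]
    (χ : DirichletCharacter ℂ q) (n : ℕ) :
    letI L := DirichletCharacter.LFunction χ
    letI d1sq := sInf { r : ℝ | ∃ b : Fin n → ℂ,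
      r = (1/(2*Real.pi)) * ∫ t : ℝ,
        ‖1 - L (((1/p : ℝ) : ℂ) + Complex.I * t)
            * ∑ k : Fin n, b k * (((k : ℕ) + 1 : ℕ) : ℂ)
                ^ (-(((1/p : ℝ) : ℂ) + Complex.I * t))‖ ^ 2
          / (1/p^2 + t^2) }
    letI d2sq := sInf { r : ℝ | ∃ b : Fin n → ℂ,
      r = (1/(2*Real.pi)) * ∫ t : ℝ,
        ‖1 - L (((1/p : ℝ) : ℂ) + Complex.I * t)
            * ∑ k : Fin n, b k * (((k : ℕ) + 1 : ℕ) : ℂ)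
                ^ (-((1/2 : ℂ) + Complex.I * t))‖ ^ 2
          / (1/4 + t^2) }
    Real.sqrt d1sq ≤ Real.sqrt d2sq ∧ Real.sqrt d2sq ≤ 2 * Real.sqrt d1sq := by
  have hp0 : 0 < p := by linarith
  set σ : ℂ := ((1 / p : ℝ) : ℂ)
  set L := χ.LFunction
  have hd (w : ℝ → ℝ) (τ : ℂ) : sInf {r : ℝ | ∃ b : Fin n → ℂ,
      r = 1 / (2 * Real.pi) * ∫ t : ℝ, ‖1 - L (σ + I * t)
        * ∑ k : Fin n, b k * (((k : ℕ) + 1 : ℕ) : ℂ) ^ (-(τ + I * t))‖ ^ 2 / w t} =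
      ⨅ b, 1 / (2 * Real.pi) * ∫ t : ℝ,
        ‖1 - L (σ + I * t) * dirichletPolynomial b (σ + I * t)‖ ^ 2 / w t :=
    congrArg sInf <| setOf_eq_range_dirichletPolynomial_line
      (fun A => 1 / (2 * Real.pi) * ∫ t : ℝ, ‖1 - L (σ + I * t) * A t‖ ^ 2 / w t) τ σ
  simp only [hd]
  have hσ : (1 / p : ℝ) ≠ 1 := by rw [Ne, div_eq_one_iff_eq hp0.ne']; linarith
  refine sqrt_iInf_integral_div_add_sq_comparison (fun b => Continuous.measurable ?_)
    (fun b t => by positivity) (by positivity) ?_ ?_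
  · exact (continuous_const.sub ((continuous_LFunction_line χ hσ).mul
      ((continuous_dirichletPolynomial b).comp (by fun_prop)))).norm.pow 2
  · rw [div_le_div_iff₀ (by norm_num) (by positivity)]
    nlinarith
  · rw [div_le_one (by positivity)]
    nlinarith
end
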